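/- arXiv:2411.06219 — 2 statements merged into one kernel-verified Lean document; each statement's English description precedes it below -/
import Mathlib

section
/- Gramian steering (reachability part of Theorem 1): Let τ₁ > 0, x₀, x₁ ∈ ℝⁿ, and suppose the weighted controllability Gramian G(τ₁) is invertible. Define u(t) = R⁻¹ Bᵀ exp(Aᵀ(τ₁ − t)) G(τ₁)⁻¹ (x₁ − x̂(τ₁)). Then the response x(t) = exp(A t) x₀ + ∫₀ᵗ exp(A(t − s)) (B u(s) + d) ds satisfies x(0) = x₀ and x(τ₁) = x₁. -/
open MeasureTheory Matrix

attribute [local instance] Matrix.normedAddCommGroup Matrix.normedSpace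

/-- The weighted controllability Gramian `G(τ) = ∫₀^τ e^{A(τ-s)} B R⁻¹ Bᵀ e^{Aᵀ(τ-s)} ds`. -/
noncomputable def gramian {n m : ℕ} (A : Matrix (Fin n) (Fin n) ℝ) (B : Matrix (Fin n) (Fin m) ℝ)
    (R : Matrix (Fin m) (Fin m) ℝ) (τ : ℝ) : Matrix (Fin n) (Fin n) ℝ :=
  ∫ s in (0:ℝ)..τ,
    NormedSpace.exp ((τ - s) • A) * B * R⁻¹ * Bᵀ * NormedSpace.exp ((τ - s) • Aᵀ)

/-- The free response `x̂(τ) = e^{Aτ} x₀ + ∫₀^τ e^{A(τ-s)} d ds`. -/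
noncomputable def freeResp {n : ℕ} (A : Matrix (Fin n) (Fin n) ℝ) (x₀ d : Fin n → ℝ) (τ : ℝ) :
    Fin n → ℝ :=
  (NormedSpace.exp (τ • A)).mulVec x₀ +
    ∫ s in (0:ℝ)..τ, (NormedSpace.exp ((τ - s) • A)).mulVec d

/-! The control is built so that the Gramian appears: pushing
`u(s) = R⁻¹ Bᵀ e^{Aᵀ(τ-s)} G(τ)⁻¹ z` through the variation-of-constants integral
`∫₀^τ e^{A(τ-s)} B u(s) ds` gives `G(τ) G(τ)⁻¹ z = z`. With `z = x₁ - x̂(τ₁)` the forced part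
of the response makes up exactly the gap between the free response and the target. -/

open NormedSpace (exp)

section

-- `exp` is continuous for any complete normed algebra structure; the `ℓ∞` operator norm
-- provides one inducing the usual topology on matrices.
attribute [local instance] Matrix.linftyOpNormedRing Matrix.linftyOpNormedAlgebra

theorem Matrix.continuous_exp_smul {ι : Type*} [Fintype ι] [DecidableEq ι] {f : ℝ → ℝ}
    (hf : Continuous f) (A : Matrix ι ι ℝ) : Continuous fun s => exp (f s • A) :=
  (@NormedSpace.exp_continuous _ _ _ (FiniteDimensional.complete ℝ _)).comp
    (hf.smul continuous_const)

end

theorem Matrix.intervalIntegral_mulVec {ι κ : Type*} [Fintype ι] [Fintype κ] {μ : Measure ℝ}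
    [IsLocallyFiniteMeasure μ] {M : ℝ → Matrix ι κ ℝ} (hM : Continuous M) (a b : ℝ)
    (v : κ → ℝ) :
    (∫ s in a..b, M s ∂μ) *ᵥ v = ∫ s in a..b, M s *ᵥ v ∂μ := by
  -- the instance path through `Matrix.normedAddCommGroup` is not found by unification alone
  let _ : ENormedAddMonoid (Matrix ι κ ℝ) := NormedAddGroup.toENormedAddMonoid
  exact (((Matrix.mulVecBilin ℝ ℝ).flip v).toContinuousLinearMap.intervalIntegral_comp_comm
    (hM.intervalIntegrable (μ := μ) a b)).symm

theorem intervalIntegral_exp_mulVec_add {ι κ : Type*} [Fintype ι] [DecidableEq ι] [Fintype κ]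
    (A : Matrix ι ι ℝ) (B : Matrix ι κ ℝ) {u : ℝ → κ → ℝ} (hu : Continuous u) (d : ι → ℝ)
    (t : ℝ) :
    ∫ s in 0..t, exp ((t - s) • A) *ᵥ (B *ᵥ u s + d) =
      (∫ s in 0..t, exp ((t - s) • A) *ᵥ B *ᵥ u s) + ∫ s in 0..t, exp ((t - s) • A) *ᵥ d := by
  have hexp := Matrix.continuous_exp_smul (continuous_sub_left t) A
  simp only [Matrix.mulVec_add]
  exact intervalIntegral.integral_add
    ((hexp.matrix_mulVec (continuous_const.matrix_mulVec hu)).intervalIntegrable 0 t)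
    ((hexp.matrix_mulVec continuous_const).intervalIntegrable 0 t)

section Gramian

variable {n m : ℕ} (A : Matrix (Fin n) (Fin n) ℝ) (B : Matrix (Fin n) (Fin m) ℝ)
  (R : Matrix (Fin m) (Fin m) ℝ)

theorem gramian_mulVec (τ : ℝ) (v : Fin n → ℝ) :
    gramian A B R τ *ᵥ v =
      ∫ s in 0..τ, exp ((τ - s) • A) *ᵥ B *ᵥ (R⁻¹ * Bᵀ * exp ((τ - s) • Aᵀ)) *ᵥ v := by
  have hτs := continuous_sub_left τ
  have hcont : Continuous fun s : ℝ =>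
      exp ((τ - s) • A) * B * R⁻¹ * Bᵀ * exp ((τ - s) • Aᵀ) :=
    ((((Matrix.continuous_exp_smul hτs A).matrix_mul continuous_const).matrix_mul
      continuous_const).matrix_mul continuous_const).matrix_mul
      (Matrix.continuous_exp_smul hτs Aᵀ)
  rw [gramian, Matrix.intervalIntegral_mulVec hcont]
  simp only [Matrix.mulVec_mulVec, Matrix.mul_assoc]

theorem intervalIntegral_exp_mulVec_gramian_control {τ : ℝ} (hG : IsUnit (gramian A B R τ))
    (z : Fin n → ℝ) :
    ∫ s in 0..τ, exp ((τ - s) • A) *ᵥ B *ᵥ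
      (R⁻¹ * Bᵀ * exp ((τ - s) • Aᵀ)) *ᵥ (gramian A B R τ)⁻¹ *ᵥ z = z := by
  rw [← gramian_mulVec, Matrix.mulVec_mulVec,
    Matrix.mul_nonsing_inv _ ((Matrix.isUnit_iff_isUnit_det _).mp hG), Matrix.one_mulVec]

end Gramian

theorem gramian_control_steers_general {n m : ℕ}
    (A : Matrix (Fin n) (Fin n) ℝ) (B : Matrix (Fin n) (Fin m) ℝ)
    (R : Matrix (Fin m) (Fin m) ℝ) (x₀ d : Fin n → ℝ)
    (τ₁ : ℝ) (x₁ : Fin n → ℝ)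
    (hG : IsUnit (gramian A B R τ₁))
    (u : ℝ → Fin m → ℝ)
    (hu : ∀ t, u t =
      (R⁻¹ * Bᵀ * NormedSpace.exp ((τ₁ - t) • Aᵀ)).mulVec
        ((gramian A B R τ₁)⁻¹.mulVec (x₁ - freeResp A x₀ d τ₁)))
    (x : ℝ → Fin n → ℝ)
    (hx : ∀ t, x t = (NormedSpace.exp (t • A)).mulVec x₀ +
      ∫ s in (0:ℝ)..t, (NormedSpace.exp ((t - s) • A)).mulVec (B.mulVec (u s) + d)) :
    x 0 = x₀ ∧ x τ₁ = x₁ := by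
  refine ⟨by simp [hx], ?_⟩
  have hu_cont : Continuous u := by
    rw [funext hu]
    exact (continuous_const.matrix_mul
      (Matrix.continuous_exp_smul (continuous_sub_left τ₁) Aᵀ)).matrix_mulVec continuous_const
  rw [hx, intervalIntegral_exp_mulVec_add A B hu_cont d, funext hu,
    intervalIntegral_exp_mulVec_gramian_control A B R hG, freeResp]
  abel

/-- Gramian steering: the Gramian-form control steers the system from `x₀` at time `0`
to `x₁` at time `τ₁`. -/
theorem gramian_control_steers {n m : ℕ}
    (A : Matrix (Fin n) (Fin n) ℝ) (B : Matrix (Fin n) (Fin m) ℝ)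
    (R : Matrix (Fin m) (Fin m) ℝ) (hR : R.PosDef) (x₀ d : Fin n → ℝ)
    (τ₁ : ℝ) (hτ₁ : 0 < τ₁) (x₁ : Fin n → ℝ)
    (hG : IsUnit (gramian A B R τ₁))
    (u : ℝ → Fin m → ℝ)
    (hu : ∀ t, u t =
      (R⁻¹ * Bᵀ * NormedSpace.exp ((τ₁ - t) • Aᵀ)).mulVec
        ((gramian A B R τ₁)⁻¹.mulVec (x₁ - freeResp A x₀ d τ₁)))
    (x : ℝ → Fin n → ℝ)
    (hx : ∀ t, x t = (NormedSpace.exp (t • A)).mulVec x₀ +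
      ∫ s in (0:ℝ)..t, (NormedSpace.exp ((t - s) • A)).mulVec (B.mulVec (u s) + d)) :
    x 0 = x₀ ∧ x τ₁ = x₁ :=
  gramian_control_steers_general A B R x₀ d τ₁ x₁ hG u hu x hx
end

section
/- Derivative of the arrival-time cost (the formula for ċ[τ₁] used to compute the optimal arrival time): Let τ > 0 and x₁ ∈ ℝⁿ, suppose G(τ) is invertible, let μ₁ > 0, and define e(σ) = G(σ)⁻¹ (x₁ − x̂(σ)) and c(σ) = μ₁ (σ + (x₁ − x̂(σ))ᵀ G(σ)⁻¹ (x₁ − x̂(σ))) for σ near τ. Then c is differentiable at τ with c′(τ) = μ₁ (1 − 2 (A x₁ + d)ᵀ e(τ) − e(τ)ᵀ B R⁻¹ Bᵀ e(τ)). -/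
open MeasureTheory Matrix

attribute [local instance] Matrix.normedAddCommGroup Matrix.normedSpace

/-!
Write `y = x₁ - x̂` and `e = G⁻¹ y`. The free response solves `x̂' = A x̂ + d`, the Gramian solves the differential Lyapunov equation
`G' = B R⁻¹ Bᵀ + A G + G Aᵀ`, and `(G⁻¹)' = -G⁻¹ G' G⁻¹`. As `G` is symmetric, the quadratic form
has derivative `2 y'ᵀ e - eᵀ G' e`, and since `G e = y` the Lyapunov terms contribute
`eᵀ (A G + G Aᵀ) e = 2 (A y)ᵀ e`, which turns `-2 (A x̂ + d)ᵀ e` into `-2 (A x₁ + d)ᵀ e`.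
-/

open NormedSpace

theorem hasDerivAt_integral_comp_sub_left {E : Type*} [NormedAddCommGroup E] [NormedSpace ℝ E]
    [CompleteSpace E] {F : ℝ → E} (hF : Continuous F) (τ : ℝ) :
    HasDerivAt (fun σ => ∫ s in (0:ℝ)..σ, F (σ - s)) (F τ) τ := by
  have h (σ : ℝ) : ∫ s in (0:ℝ)..σ, F (σ - s) = ∫ u in (0:ℝ)..σ, F u := by
    simp [intervalIntegral.integral_comp_sub_left]
  simpa only [h] using (hF.integral_hasStrictDerivAt 0 τ).hasDerivAt

section BilinearDerivatives

variable {𝕜 : Type*} [NontriviallyNormedField 𝕜] [CompleteSpace 𝕜] {ι κ : Type*} [Fintype ι]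
  [Fintype κ] {x : 𝕜}

theorem HasDerivAt.matrix_mulVec {M : 𝕜 → Matrix ι κ 𝕜} {v : 𝕜 → κ → 𝕜} {M' : Matrix ι κ 𝕜}
    {v' : κ → 𝕜} (hM : HasDerivAt M M' x) (hv : HasDerivAt v v' x) :
    HasDerivAt (fun t => M t *ᵥ v t) (M' *ᵥ v x + M x *ᵥ v') x :=
  ((mulVecBilin 𝕜 𝕜 : Matrix ι κ 𝕜 →ₗ[𝕜] (κ → 𝕜) →ₗ[𝕜] ι → 𝕜).toContinuousBilinearMap
    |>.hasDerivAt_of_bilinear (fun _ => hM) (fun _ => hv)).congr_deriv (add_comm _ _)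

theorem HasDerivAt.dotProduct {u v : 𝕜 → ι → 𝕜} {u' v' : ι → 𝕜} (hu : HasDerivAt u u' x)
    (hv : HasDerivAt v v' x) :
    HasDerivAt (fun t => u t ⬝ᵥ v t) (u' ⬝ᵥ v x + u x ⬝ᵥ v') x :=
  ((dotProductBilin 𝕜 𝕜 : (ι → 𝕜) →ₗ[𝕜] (ι → 𝕜) →ₗ[𝕜] 𝕜).toContinuousBilinearMap
    |>.hasDerivAt_of_bilinear (fun _ => hu) (fun _ => hv)).congr_deriv (add_comm _ _)

end BilinearDerivatives

-- `HasDerivAt` only sees the topology of the matrices, so any matrix norm may be used to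
-- differentiate `Ring.inverse` and `exp`; these need a normed algebra, hence the operator norm.
-- The closing `rfl`s below identify its multiplication with matrix multiplication.
open scoped Matrix.Norms.Operator in
theorem HasDerivAt.matrix_inv {𝕜 : Type*} [RCLike 𝕜] {ι : Type*} [Fintype ι] [DecidableEq ι]
    {G : 𝕜 → Matrix ι ι 𝕜} {G' : Matrix ι ι 𝕜} {x : 𝕜} (hG : HasDerivAt G G' x)
    (hGx : IsUnit (G x)) :
    HasDerivAt (fun t => (G t)⁻¹) (-((G x)⁻¹ * G' * (G x)⁻¹)) x := by
  obtain ⟨u, hu⟩ := hGx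
  have hinv := hasFDerivAt_ringInverse (𝕜 := 𝕜) u
  have hring : (Ring.inverse : Matrix ι ι 𝕜 → Matrix ι ι 𝕜) = Inv.inv :=
    funext fun A => (nonsing_inv_eq_ringInverse A).symm
  rw [Matrix.coe_units_inv, hu, hring] at hinv
  exact (hinv.comp_hasDerivAt x hG).congr_deriv (by simp [Matrix.mul_assoc])

theorem HasDerivAt.dotProduct_inv_mulVec {𝕜 : Type*} [RCLike 𝕜] {ι : Type*} [Fintype ι]
    [DecidableEq ι] {G : 𝕜 → Matrix ι ι 𝕜} {y : 𝕜 → ι → 𝕜} {G' : Matrix ι ι 𝕜} {y' : ι → 𝕜}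
    {x : 𝕜} (hG : HasDerivAt G G' x) (hy : HasDerivAt y y' x) (hGx : IsUnit (G x))
    (hGx_symm : (G x).IsSymm) :
    HasDerivAt (fun t => y t ⬝ᵥ (G t)⁻¹ *ᵥ y t)
      (2 * (y' ⬝ᵥ (G x)⁻¹ *ᵥ y x) - (G x)⁻¹ *ᵥ y x ⬝ᵥ G' *ᵥ ((G x)⁻¹ *ᵥ y x)) x := by
  refine (hy.dotProduct ((hG.matrix_inv hGx).matrix_mulVec hy)).congr_deriv ?_
  set N := (G x)⁻¹
  have hN (v : ι → 𝕜) : y x ⬝ᵥ N *ᵥ v = N *ᵥ y x ⬝ᵥ v := by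
    rw [dotProduct_mulVec, ← vecMul_transpose, hGx_symm.inv.eq]
  rw [dotProduct_add, neg_mulVec, dotProduct_neg, ← mulVec_mulVec, ← mulVec_mulVec, hN, hN,
    dotProduct_comm y']
  ring

theorem Matrix.IsSymm.dotProduct_mul_add_mul_transpose_mulVec {ι α : Type*} [Fintype ι]
    [CommRing α] {G : Matrix ι ι α} (hG : G.IsSymm) (A : Matrix ι ι α) (e : ι → α) :
    e ⬝ᵥ (A * G + G * Aᵀ) *ᵥ e = 2 * (A *ᵥ (G *ᵥ e) ⬝ᵥ e) := by
  have hGe : e ᵥ* G = G *ᵥ e := by rw [← vecMul_transpose, hG.eq]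
  have hGAe : e ⬝ᵥ (G * Aᵀ) *ᵥ e = A *ᵥ (G *ᵥ e) ⬝ᵥ e := by
    rw [← mulVec_mulVec, dotProduct_mulVec, dotProduct_mulVec, vecMul_transpose, hGe]
  rw [add_mulVec, dotProduct_add, hGAe, ← mulVec_mulVec, dotProduct_comm]
  ring

section MatrixExponential

variable {ι : Type*} [Fintype ι] [DecidableEq ι]

open scoped Matrix.Norms.Operator in
theorem hasDerivAt_exp_smul_mulVec (A : Matrix ι ι ℝ) (v : ι → ℝ) (t : ℝ) :
    HasDerivAt (fun u => exp (u • A) *ᵥ v) (A *ᵥ (exp (t • A) *ᵥ v)) t :=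
  ((hasDerivAt_exp_smul_const' A t).matrix_mulVec (hasDerivAt_const t v)).congr_deriv
    (by rw [mulVec_zero, add_zero, mulVec_mulVec]; rfl)

theorem continuous_exp_smul_mulVec (A : Matrix ι ι ℝ) (v : ι → ℝ) :
    Continuous fun u : ℝ => exp (u • A) *ᵥ v :=
  continuous_iff_continuousAt.2 fun u => (hasDerivAt_exp_smul_mulVec A v u).continuousAt

theorem mulVec_integral_exp_smul_mulVec (A : Matrix ι ι ℝ) (v : ι → ℝ) (τ : ℝ) :
    A *ᵥ ∫ s in (0:ℝ)..τ, exp ((τ - s) • A) *ᵥ v = exp (τ • A) *ᵥ v - v := by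
  rw [intervalIntegral.integral_comp_sub_left (fun u => exp (u • A) *ᵥ v), sub_self, sub_zero,
    ← mulVecLin_apply, ← LinearMap.coe_toContinuousLinearMap',
    ← ContinuousLinearMap.intervalIntegral_comp_comm _
      ((continuous_exp_smul_mulVec A v).intervalIntegrable 0 τ)]
  simpa using intervalIntegral.integral_eq_sub_of_hasDerivAt
    (fun u _ => hasDerivAt_exp_smul_mulVec A v u)
    ((continuous_const.matrix_mulVec (continuous_exp_smul_mulVec A v)).intervalIntegrable 0 τ)

noncomputable def gramianIntegrand (A M : Matrix ι ι ℝ) (t : ℝ) : Matrix ι ι ℝ :=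
  exp (t • A) * M * exp (t • Aᵀ)

open scoped Matrix.Norms.Operator in
theorem continuous_gramianIntegrand (A M : Matrix ι ι ℝ) : Continuous (gramianIntegrand A M) := by
  unfold gramianIntegrand
  fun_prop

open scoped Matrix.Norms.Operator in
theorem hasDerivAt_gramianIntegrand (A M : Matrix ι ι ℝ) (t : ℝ) :
    HasDerivAt (gramianIntegrand A M)
      (A * gramianIntegrand A M t + gramianIntegrand A M t * Aᵀ) t :=
  (((hasDerivAt_exp_smul_const' A t).mul_const M).mul (hasDerivAt_exp_smul_const Aᵀ t)).congr_deriv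
    (by simp only [gramianIntegrand, Matrix.mul_assoc]; rfl)

theorem gramianIntegrand_isSymm (A : Matrix ι ι ℝ) {M : Matrix ι ι ℝ} (hM : M.IsSymm) (t : ℝ) :
    (gramianIntegrand A M t).IsSymm := by
  have hexp : exp (t • Aᵀ) = (exp (t • A))ᵀ := by rw [← transpose_smul, exp_transpose]
  simp only [gramianIntegrand, IsSymm, hexp, transpose_mul, transpose_transpose, hM.eq,
    Matrix.mul_assoc]

end MatrixExponential

theorem hasDerivAt_freeResp {n : ℕ} (A : Matrix (Fin n) (Fin n) ℝ) (x₀ d : Fin n → ℝ) (τ : ℝ) :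
    HasDerivAt (freeResp A x₀ d) (A *ᵥ freeResp A x₀ d τ + d) τ :=
  ((hasDerivAt_exp_smul_mulVec A x₀ τ).add
    (hasDerivAt_integral_comp_sub_left (continuous_exp_smul_mulVec A d) τ)).congr_deriv
    (by unfold freeResp; rw [mulVec_add, mulVec_integral_exp_smul_mulVec]; abel)

section Gramian

variable {n m : ℕ} (A : Matrix (Fin n) (Fin n) ℝ) (B : Matrix (Fin n) (Fin m) ℝ)

theorem gramian_eq_integral (R : Matrix (Fin m) (Fin m) ℝ) (τ : ℝ) :
    gramian A B R τ = ∫ s in (0:ℝ)..τ, gramianIntegrand A (B * R⁻¹ * Bᵀ) (τ - s) := by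
  simp only [gramian, gramianIntegrand, Matrix.mul_assoc]

theorem hasDerivAt_gramian (R : Matrix (Fin m) (Fin m) ℝ) (τ : ℝ) :
    HasDerivAt (gramian A B R) (gramianIntegrand A (B * R⁻¹ * Bᵀ) τ) τ := by
  rw [funext (gramian_eq_integral A B R)]
  exact hasDerivAt_integral_comp_sub_left (continuous_gramianIntegrand A _) τ

theorem gramian_isSymm {R : Matrix (Fin m) (Fin m) ℝ} (hR : R.IsSymm) (τ : ℝ) :
    (gramian A B R τ).IsSymm := by
  let transposeₗᵢ : Matrix (Fin n) (Fin n) ℝ →ₗᵢ[ℝ] Matrix (Fin n) (Fin n) ℝ :=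
    { (transposeLinearEquiv (Fin n) (Fin n) ℝ ℝ).toLinearMap with norm_map' := norm_transpose }
  have hM : (B * R⁻¹ * Bᵀ).IsSymm := by
    rw [IsSymm, transpose_mul, transpose_mul, transpose_transpose, hR.inv.eq, Matrix.mul_assoc]
  rw [IsSymm, gramian_eq_integral]
  exact (transposeₗᵢ.intervalIntegral_comp_comm _).symm.trans
    (intervalIntegral.integral_congr fun s _ => (gramianIntegrand_isSymm A hM _).eq)

open scoped Matrix.Norms.Operator in
theorem gramianIntegrand_eq_lyapunov (R : Matrix (Fin m) (Fin m) ℝ) (σ : ℝ) :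
    gramianIntegrand A (B * R⁻¹ * Bᵀ) σ
      = B * R⁻¹ * Bᵀ + A * gramian A B R σ + gramian A B R σ * Aᵀ := by
  have hφ (u : ℝ) : HasDerivAt (fun u => gramianIntegrand A (B * R⁻¹ * Bᵀ) u
      - (B * R⁻¹ * Bᵀ + A * gramian A B R u + gramian A B R u * Aᵀ)) 0 u := by
    have hG := hasDerivAt_gramian A B R u
    exact ((hasDerivAt_gramianIntegrand A _ u).sub
      (((hG.const_mul A).const_add _).add (hG.mul_const Aᵀ))).congr_deriv (sub_self _)
  have h := is_const_of_deriv_eq_zero (fun u => (hφ u).differentiableAt) (fun u => (hφ u).deriv) σ 0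
  simpa [gramianIntegrand, gramian, sub_eq_zero] using h

end Gramian

theorem arrival_time_cost_deriv_general {n m : ℕ}
    (A : Matrix (Fin n) (Fin n) ℝ) (B : Matrix (Fin n) (Fin m) ℝ)
    (R : Matrix (Fin m) (Fin m) ℝ) (hR : R.PosDef) (x₀ d x₁ : Fin n → ℝ)
    (τ : ℝ) (hG : IsUnit (gramian A B R τ))
    (μ₁ : ℝ)
    (e : ℝ → Fin n → ℝ)
    (he : ∀ σ, e σ = (gramian A B R σ)⁻¹.mulVec (x₁ - freeResp A x₀ d σ))
    (c : ℝ → ℝ)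
    (hc : ∀ σ, c σ = μ₁ * (σ + (x₁ - freeResp A x₀ d σ) ⬝ᵥ
      (gramian A B R σ)⁻¹.mulVec (x₁ - freeResp A x₀ d σ))) :
    HasDerivAt c
      (μ₁ * (1 - 2 * ((A.mulVec x₁ + d) ⬝ᵥ e τ) - e τ ⬝ᵥ (B * R⁻¹ * Bᵀ).mulVec (e τ))) τ := by
  have hGsymm := gramian_isSymm A B (isHermitian_iff_isSymm.1 hR.1) τ
  have hy : HasDerivAt (fun σ => x₁ - freeResp A x₀ d σ) (-(A *ᵥ freeResp A x₀ d τ + d)) τ := by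
    simpa using (hasDerivAt_freeResp A x₀ d τ).const_sub x₁
  have hq := (gramianIntegrand_eq_lyapunov A B R τ ▸ hasDerivAt_gramian A B R τ).dotProduct_inv_mulVec
    hy hG hGsymm
  have hGe : gramian A B R τ *ᵥ e τ = x₁ - freeResp A x₀ d τ := by
    rw [he, mulVec_mulVec, mul_nonsing_inv _ ((isUnit_iff_isUnit_det _).1 hG), one_mulVec]
  rw [funext hc]
  refine (((hasDerivAt_id τ).add hq).const_mul μ₁).congr_deriv ?_
  rw [← he, add_assoc, add_mulVec, dotProduct_add, hGsymm.dotProduct_mul_add_mul_transpose_mulVec,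
    hGe, mulVec_sub]
  simp only [neg_dotProduct, add_dotProduct, sub_dotProduct]
  ring

/-- Derivative of the arrival-time cost
`c(σ) = μ₁ (σ + (x₁ − x̂(σ))ᵀ G(σ)⁻¹ (x₁ − x̂(σ)))`:
`c′(τ) = μ₁ (1 − 2 (A x₁ + d)ᵀ e(τ) − e(τ)ᵀ B R⁻¹ Bᵀ e(τ))`, where
`e(σ) = G(σ)⁻¹ (x₁ − x̂(σ))`. -/
theorem arrival_time_cost_deriv {n m : ℕ}
    (A : Matrix (Fin n) (Fin n) ℝ) (B : Matrix (Fin n) (Fin m) ℝ)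
    (R : Matrix (Fin m) (Fin m) ℝ) (hR : R.PosDef) (x₀ d x₁ : Fin n → ℝ)
    (τ : ℝ) (hτ : 0 < τ) (hG : IsUnit (gramian A B R τ))
    (μ₁ : ℝ) (hμ₁ : 0 < μ₁)
    (e : ℝ → Fin n → ℝ)
    (he : ∀ σ, e σ = (gramian A B R σ)⁻¹.mulVec (x₁ - freeResp A x₀ d σ))
    (c : ℝ → ℝ)
    (hc : ∀ σ, c σ = μ₁ * (σ + (x₁ - freeResp A x₀ d σ) ⬝ᵥ
      (gramian A B R σ)⁻¹.mulVec (x₁ - freeResp A x₀ d σ))) :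
    HasDerivAt c
      (μ₁ * (1 - 2 * ((A.mulVec x₁ + d) ⬝ᵥ e τ) - e τ ⬝ᵥ (B * R⁻¹ * Bᵀ).mulVec (e τ))) τ :=
  arrival_time_cost_deriv_general A B R hR x₀ d x₁ τ hG μ₁ e he c hc
end
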